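/- (Andreani–Martínez–Schuverdt) Let x* be a local minimizer of (NLP) with MFCQ holding at x*, and assume the rank of the Jacobian matrix J(x) ∈ ℝ^{(m+q)×n} is constant for all x in a neighborhood of x*, where q is the number of active inequality constraints at x*. Then there exists a Lagrange multiplier (λ,μ) ∈ Λ(x*) such that dᵀ∇²ₓₓL(x*,λ,μ)d ≥ 0 for all d ∈ S(x*) (WSOC holds at x*). -/

import Mathlib

/-! Under MFCQ, a direction `d` with `h'(x*) d = 0` and `g_j'(x*) d < 0` for the active `j` is
the velocity of a feasible curve (implicit function theorem for the independent equality
constraints), so `f'(x*) d ≥ 0`; the MFCQ direction extends this to the closed linearized cone,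
and Farkas' lemma turns it into Lagrange multipliers.

For the second order, pick a maximal linearly independent subfamily of the active gradients at
`x*`. By constant rank it still spans all active gradients near `x*`. For `d ∈ S(x*)` the implicit
function theorem gives a `C²` curve `γ` with `γ 0 = x*`, `γ' 0 = d` along which that subfamily is
constant; the other active gradients lie in its span, so every active constraint is constant along
`γ`. Hence `γ` is feasible, `L = f` along `γ`, and `0 ≤ (L ∘ γ)''(0) = dᵀ ∇²L d` since
`∇L(x*) = 0`. -/

open scoped BigOperators Pointwise
open Matrix

attribute [local instance] Classical.propDecidable

noncomputable section

/-- The gradient vector of `φ` at `x` (the vector of partial derivatives). -/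
def gradVec {n : ℕ} (φ : (Fin n → ℝ) → ℝ) (x : Fin n → ℝ) : Fin n → ℝ :=
  fun k => fderiv ℝ φ x (Pi.single k 1)

/-- The quadratic form `d ↦ dᵀ ∇²φ(x) d` of the Hessian of `φ` at `x`. -/
def hessQ {n : ℕ} (φ : (Fin n → ℝ) → ℝ) (x d : Fin n → ℝ) : ℝ :=
  iteratedFDeriv ℝ 2 φ x ![d, d]

/-- Feasibility for the problem (NLP). -/
def Feas {n m p : ℕ} (h : Fin m → (Fin n → ℝ) → ℝ) (g : Fin p → (Fin n → ℝ) → ℝ)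
    (x : Fin n → ℝ) : Prop :=
  (∀ i, h i x = 0) ∧ ∀ j, g j x ≤ 0

/-- The Lagrangian of (NLP). -/
def Lagr {n m p : ℕ} (f : (Fin n → ℝ) → ℝ) (h : Fin m → (Fin n → ℝ) → ℝ)
    (g : Fin p → (Fin n → ℝ) → ℝ) (lam : Fin m → ℝ) (mu : Fin p → ℝ) (x : Fin n → ℝ) : ℝ :=
  f x + ∑ i, lam i * h i x + ∑ j, mu j * g j x

/-- `(lam, mu)` is a Lagrange multiplier at `xs`, i.e. `(lam, mu) ∈ Λ(xs)`. -/
def IsLagMult {n m p : ℕ} (f : (Fin n → ℝ) → ℝ) (h : Fin m → (Fin n → ℝ) → ℝ)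
    (g : Fin p → (Fin n → ℝ) → ℝ) (xs : Fin n → ℝ) (lam : Fin m → ℝ) (mu : Fin p → ℝ) : Prop :=
  (∀ j, 0 ≤ mu j) ∧ fderiv ℝ (Lagr f h g lam mu) xs = 0 ∧ ∀ j, mu j * g j xs = 0

/-- The Mangasarian-Fromovitz constraint qualification at `xs`. -/
def MFCQ {n m p : ℕ} (h : Fin m → (Fin n → ℝ) → ℝ) (g : Fin p → (Fin n → ℝ) → ℝ)
    (xs : Fin n → ℝ) : Prop :=
  LinearIndependent ℝ (fun i : Fin m => fderiv ℝ (h i) xs) ∧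
  ∃ d : Fin n → ℝ, (∀ i, fderiv ℝ (h i) xs d = 0) ∧
    ∀ j, g j xs = 0 → fderiv ℝ (g j) xs d < 0

/-- Membership in the critical cone `C(xs)`. -/
def critCone {n m p : ℕ} (f : (Fin n → ℝ) → ℝ) (h : Fin m → (Fin n → ℝ) → ℝ)
    (g : Fin p → (Fin n → ℝ) → ℝ) (xs d : Fin n → ℝ) : Prop :=
  fderiv ℝ f xs d = 0 ∧ (∀ i, fderiv ℝ (h i) xs d = 0) ∧
    ∀ j, g j xs = 0 → fderiv ℝ (g j) xs d ≤ 0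

/-- Membership in the critical subspace `S(xs)`. -/
def critSub {n m p : ℕ} (h : Fin m → (Fin n → ℝ) → ℝ) (g : Fin p → (Fin n → ℝ) → ℝ)
    (xs d : Fin n → ℝ) : Prop :=
  (∀ i, fderiv ℝ (h i) xs d = 0) ∧ ∀ j, g j xs = 0 → fderiv ℝ (g j) xs d = 0

/-- The Jacobian matrix `J(x)` of equality and active inequality constraints
(activity taken at the base point `xs`). -/
def Jac {n m p : ℕ} (h : Fin m → (Fin n → ℝ) → ℝ) (g : Fin p → (Fin n → ℝ) → ℝ)
    (xs x : Fin n → ℝ) : Matrix (Fin m ⊕ {j : Fin p // g j xs = 0}) (Fin n) ℝ :=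
  Matrix.of fun i k =>
    Sum.elim (fun i' => fderiv ℝ (h i') x (Pi.single k 1))
      (fun j' => fderiv ℝ (g j'.1) x (Pi.single k 1)) i

/-- A first-order cone: the (direct) sum of a linear subspace and a ray. -/
def IsFirstOrderCone {n : ℕ} (K : Set (Fin n → ℝ)) : Prop :=
  ∃ (W : Submodule ℝ (Fin n → ℝ)) (d0 : Fin n → ℝ),
    K = {x | ∃ w ∈ W, ∃ r : ℝ, 0 ≤ r ∧ x = w + r • d0}

/-- The rank of a family of vectors: the dimension of its linear span. -/
def famRank {ι : Type*} {n : ℕ} (v : ι → (Fin n → ℝ)) : ℕ :=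
  Module.finrank ℝ (Submodule.span ℝ (Set.range v))

open Filter Set Topology Submodule Module

universe u

section Calculus

variable {E : Type*} [NormedAddCommGroup E] [NormedSpace ℝ E]

theorem HasDerivAt.nonneg_of_eventually_le_nhdsGT {φ : ℝ → ℝ} {a L : ℝ} (hφ : HasDerivAt φ L a)
    (hmin : ∀ᶠ t in 𝓝[>] a, φ a ≤ φ t) : 0 ≤ L := by
  refine ge_of_tendsto (hφ.tendsto_slope.mono_left (nhdsGT_le_nhdsNE a)) ?_
  filter_upwards [self_mem_nhdsWithin, hmin] with t ht hle
  rw [slope_def_field]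
  exact div_nonneg (sub_nonneg.2 hle) (sub_nonneg.2 (le_of_lt ht))

theorem HasDerivAt.eventually_neg_nhdsGT {φ : ℝ → ℝ} {a L : ℝ} (hφ : HasDerivAt φ L a)
    (hL : L < 0) (ha : φ a = 0) : ∀ᶠ t in 𝓝[>] a, φ t < 0 := by
  filter_upwards [self_mem_nhdsWithin,
    (hφ.tendsto_slope.mono_left (nhdsGT_le_nhdsNE a)).eventually_lt_const hL] with t ht hslope
  have := sub_smul_slope φ a t
  rw [ha, vsub_eq_sub, sub_zero, smul_eq_mul] at this
  rw [← this]
  exact mul_neg_of_pos_of_neg (sub_pos.2 ht) hslope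

/-- If the second derivative were negative, `a` would also be a local maximum, so `φ` would be
locally constant and its second derivative would vanish. -/
theorem IsLocalMin.deriv_deriv_nonneg {φ : ℝ → ℝ} {a : ℝ} (h : IsLocalMin φ a)
    (hc : ContinuousAt φ a) : 0 ≤ deriv (deriv φ) a := by
  by_contra! hneg
  have hmin : ∀ᶠ t in 𝓝 a, φ a ≤ φ t := h
  have hconst : φ =ᶠ[𝓝 a] fun _ => φ a :=
    (hmin.and (isLocalMax_of_deriv_deriv_neg hneg h.deriv_eq_zero hc)).mono
      fun _ ht => le_antisymm ht.2 ht.1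
  have hderiv : deriv φ =ᶠ[𝓝 a] fun _ => 0 :=
    hconst.eventuallyEq_nhds.mono fun _ ht => by simpa using ht.deriv_eq
  simp [hderiv.deriv_eq] at hneg

theorem eventually_eq_of_eventually_hasDerivAt_zero {G : Type*} [NormedAddCommGroup G]
    [NormedSpace ℝ G] {φ : ℝ → G} {a : ℝ} (h : ∀ᶠ t in 𝓝 a, HasDerivAt φ 0 t) :
    ∀ᶠ t in 𝓝 a, φ t = φ a := by
  obtain ⟨ε, hε, hball⟩ := Metric.eventually_nhds_iff_ball.1 h
  filter_upwards [Metric.ball_mem_nhds a hε] with t ht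
  exact Metric.isOpen_ball.is_const_of_deriv_eq_zero (convex_ball a ε).isPreconnected
    (fun s hs => (hball s hs).differentiableAt.differentiableWithinAt)
    (fun s hs => (hball s hs).deriv) ht (Metric.mem_ball_self hε)

theorem deriv_deriv_comp_eq_iteratedFDeriv {ψ : E → ℝ} {γ : ℝ → E} {d : E}
    (hψ : ContDiffAt ℝ 2 ψ (γ 0)) (hψ' : fderiv ℝ ψ (γ 0) = 0) (hγ : ContDiffAt ℝ 2 γ 0)
    (hγ' : HasDerivAt γ d 0) :
    deriv (deriv fun t => ψ (γ t)) 0 = iteratedFDeriv ℝ 2 ψ (γ 0) ![d, d] := by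
  have hγt : Tendsto γ (𝓝 0) (𝓝 (γ 0)) := hγ.continuousAt
  have hderiv : deriv (fun t => ψ (γ t)) =ᶠ[𝓝 0] fun t => fderiv ℝ ψ (γ t) (deriv γ t) := by
    filter_upwards [(hγ.eventually (by simp)).mono fun t ht => ht.differentiableAt two_ne_zero,
      hγt.eventually ((hψ.eventually (by simp)).mono fun x hx => hx.differentiableAt two_ne_zero)]
      with t hγt hψt
    exact (hψt.hasFDerivAt.comp_hasDerivAt t hγt.hasDerivAt).deriv
  have hψ2 : HasFDerivAt (fderiv ℝ ψ) (fderiv ℝ (fderiv ℝ ψ) (γ 0)) (γ 0) :=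
    ((hψ.fderiv_right (m := 1) (by norm_num)).differentiableAt one_ne_zero).hasFDerivAt
  have hγ2 : HasDerivAt (deriv γ) (deriv (deriv γ) 0) 0 :=
    ((hγ.derivWithin (m := 1) (by norm_num)).differentiableAt one_ne_zero).hasDerivAt
  rw [hderiv.deriv_eq]
  refine ((hψ2.comp_hasDerivAt 0 hγ').clm_apply hγ2).deriv.trans ?_
  simp [hγ'.deriv, hψ', iteratedFDeriv_two_apply]

end Calculus

section LevelSets

variable {E : Type*} [NormedAddCommGroup E] [NormedSpace ℝ E]

theorem ContinuousLinearMap.surjective_pi_of_linearIndependent {κ : Type*} [Fintype κ]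
    {φ : κ → E →L[ℝ] ℝ} (hφ : LinearIndependent ℝ φ) :
    Function.Surjective (ContinuousLinearMap.pi φ) := by
  change Function.Surjective (ContinuousLinearMap.pi φ : E →ₗ[ℝ] κ → ℝ)
  rw [← LinearMap.dualMap_injective_iff, injective_iff_map_eq_zero]
  intro ℓ hℓ
  have hsum : ∑ b, ℓ (Pi.single b 1) • φ b = 0 := by
    ext v
    have := LinearMap.congr_fun hℓ v
    rw [LinearMap.dualMap_apply, LinearMap.pi_apply_eq_sum_univ] at this
    have hsingle : ∀ b : κ, (fun j => if b = j then (1 : ℝ) else 0) = Pi.single b 1 := fun b => by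
      ext j; rw [Pi.single_apply]; exact if_congr eq_comm rfl rfl
    simpa [hsingle, mul_comm] using this
  have hzero := Fintype.linearIndependent_iff.1 hφ _ hsum
  exact (Pi.basisFun ℝ κ).ext fun b => by simpa using hzero b

/-- The curve is `t ↦ x₀ + t • d + A (ψ t)`, where `A` is a right inverse of `F'(x₀)` and the
correction `ψ`, with `ψ' 0 = 0`, is given by the implicit function theorem. -/
theorem exists_curve_mem_levelSet {G : Type*} [NormedAddCommGroup G] [NormedSpace ℝ G]
    [FiniteDimensional ℝ G] {F : E → G} {x₀ d : E} {n : WithTop ℕ∞}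
    (hF : ContDiffAt ℝ n F x₀) (hn : n ≠ 0) (hsurj : Function.Surjective (fderiv ℝ F x₀))
    (hd : fderiv ℝ F x₀ d = 0) :
    ∃ γ : ℝ → E, ContDiffAt ℝ n γ 0 ∧ γ 0 = x₀ ∧ HasDerivAt γ d 0 ∧
      ∀ᶠ t in 𝓝 0, F (γ t) = F x₀ := by
  obtain ⟨A, hA⟩ := (fderiv ℝ F x₀).exists_rightInverse_of_surjective
    (LinearMap.range_eq_top.2 hsurj)
  set θ : ℝ × G → E := fun z => x₀ + z.1 • d + A z.2
  have hθ0 : θ 0 = x₀ := by simp [θ]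
  have hθ : HasFDerivAt θ ((ContinuousLinearMap.fst ℝ ℝ G).smulRight d + A.comp (.snd ℝ ℝ G)) 0 :=
    ((hasFDerivAt_fst.smul_const d).const_add x₀).add (A.hasFDerivAt.comp _ hasFDerivAt_snd)
  have hFθ : ContDiffAt ℝ n (F ∘ θ) 0 := by
    refine ContDiffAt.comp _ (hθ0 ▸ hF) ?_
    fun_prop
  have hFx : HasFDerivAt F (fderiv ℝ F x₀) (θ 0) := hθ0 ▸ (hF.differentiableAt hn).hasFDerivAt
  have hD : fderiv ℝ (F ∘ θ) 0 = (fderiv ℝ F x₀).comp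
      ((ContinuousLinearMap.fst ℝ ℝ G).smulRight d + A.comp (.snd ℝ ℝ G)) :=
    (hFx.comp _ hθ).fderiv
  have hinr : fderiv ℝ (F ∘ θ) 0 ∘L .inr ℝ ℝ G = .id ℝ G := by
    rw [hD, ← hA]; ext; simp
  have hinl : fderiv ℝ (F ∘ θ) 0 ∘L .inl ℝ ℝ G = 0 := by
    rw [hD]; ext; simp [hd]
  have hinv : (fderiv ℝ (F ∘ θ) 0 ∘L .inr ℝ ℝ G).IsInvertible := hinr ▸ ⟨.refl ℝ G, rfl⟩
  set ψ := hFθ.implicitFunction hn hinv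
  have hψ0 : ψ 0 = 0 := hFθ.implicitFunction_apply_self hn hinv
  have hψ' : HasDerivAt ψ 0 0 := by
    have := (hFθ.hasStrictFDerivAt_implicitFunction hn hinv).hasFDerivAt
    rw [hinl, ContinuousLinearMap.comp_zero] at this
    exact this.hasDerivAt.congr_deriv (by simp)
  refine ⟨fun t => θ (t, ψ t), ?_, by simp [hψ0, θ], ?_, ?_⟩
  · have := hFθ.contDiffAt_implicitFunction hn hinv
    simp only [θ]
    fun_prop
  · have := (((hasDerivAt_id (0 : ℝ)).smul_const d).const_add x₀).add
      (A.hasFDerivAt.comp_hasDerivAt _ hψ')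
    simp only [id, one_smul, map_zero, add_zero] at this
    exact this
  · filter_upwards [hFθ.eventually_apply_implicitFunction hn hinv] with t ht
    simpa [hθ0] using ht

theorem exists_curve_of_linearIndependent_fderiv {κ : Type*} [Fintype κ] {F : κ → E → ℝ}
    {x₀ d : E} {n : WithTop ℕ∞} (hF : ∀ b, ContDiffAt ℝ n (F b) x₀) (hn : n ≠ 0)
    (hli : LinearIndependent ℝ fun b => fderiv ℝ (F b) x₀) (hd : ∀ b, fderiv ℝ (F b) x₀ d = 0) :
    ∃ γ : ℝ → E, ContDiffAt ℝ n γ 0 ∧ γ 0 = x₀ ∧ HasDerivAt γ d 0 ∧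
      ∀ᶠ t in 𝓝 0, ∀ b, F b (γ t) = F b x₀ := by
  have hΦ : fderiv ℝ (fun x b => F b x) x₀ = ContinuousLinearMap.pi fun b => fderiv ℝ (F b) x₀ :=
    fderiv_pi fun b => (hF b).differentiableAt hn
  obtain ⟨γ, hγ, hγ0, hγd, hγF⟩ := exists_curve_mem_levelSet (F := fun x b => F b x)
    (contDiffAt_pi.2 hF) hn (hΦ ▸ ContinuousLinearMap.surjective_pi_of_linearIndependent hli)
    (by rw [hΦ]; ext b; exact hd b)
  exact ⟨γ, hγ, hγ0, hγd, hγF.mono fun t ht b => congrFun ht b⟩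

theorem eventually_comp_eq_of_fderiv_mem_span {κ : Type*} {F : κ → E → ℝ} {c : E → ℝ}
    {γ : ℝ → E} {a : ℝ} (hF : ∀ b, Differentiable ℝ (F b)) (hc : Differentiable ℝ c)
    (hγ : ∀ᶠ t in 𝓝 a, DifferentiableAt ℝ γ t) (hFγ : ∀ᶠ t in 𝓝 a, ∀ b, F b (γ t) = F b (γ a))
    (hspan : ∀ᶠ t in 𝓝 a, fderiv ℝ c (γ t) ∈ span ℝ (range fun b => fderiv ℝ (F b) (γ t))) :
    ∀ᶠ t in 𝓝 a, c (γ t) = c (γ a) := by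
  refine eventually_eq_of_eventually_hasDerivAt_zero ?_
  filter_upwards [hγ, hFγ.eventually_nhds, hspan] with t hγt hFt hspant
  have hchain {ψ : E → ℝ} (hψ : Differentiable ℝ ψ) :
      HasDerivAt (fun s => ψ (γ s)) (fderiv ℝ ψ (γ t) (deriv γ t)) t :=
    (hψ (γ t)).hasFDerivAt.comp_hasDerivAt t hγt.hasDerivAt
  have hFker : ∀ b, fderiv ℝ (F b) (γ t) (deriv γ t) = 0 := fun b =>
    (hchain (hF b)).unique <| (hasDerivAt_const t (F b (γ a))).congr_of_eventuallyEq <|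
      hFt.mono fun s hs => hs b
  have hle : span ℝ (range fun b => fderiv ℝ (F b) (γ t)) ≤
      LinearMap.ker (ContinuousLinearMap.apply ℝ ℝ (deriv γ t) : (E →L[ℝ] ℝ) →ₗ[ℝ] ℝ) :=
    span_le.2 <| range_subset_iff.2 hFker
  have hcker : fderiv ℝ c (γ t) (deriv γ t) = 0 := hle hspant
  simpa [hcker] using hchain hc

end LevelSets

/-- A maximal linearly independent subfamily at `x₀` stays independent nearby, so by the rank
count it still spans the whole family there. -/
theorem exists_linearIndependent_eventually_mem_span {X V : Type*} {ι : Type u}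
    [TopologicalSpace X] [NormedAddCommGroup V] [NormedSpace ℝ V] [FiniteDimensional ℝ V]
    [Finite ι] {v : ι → X → V} {x₀ : X} (hv : ∀ i, ContinuousAt (v i) x₀)
    (hrank : ∀ᶠ x in 𝓝 x₀, finrank ℝ (span ℝ (range fun i => v i x)) =
      finrank ℝ (span ℝ (range fun i => v i x₀))) :
    ∃ (κ : Type u) (_ : Fintype κ) (σ : κ → ι), LinearIndependent ℝ (fun b => v (σ b) x₀) ∧
      ∀ᶠ x in 𝓝 x₀, ∀ i, v i x ∈ span ℝ (range fun b => v (σ b) x) := by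
  obtain ⟨κ, σ, hσ, hspan₀, hli₀⟩ := exists_linearIndependent' ℝ fun i => v i x₀
  have : Finite κ := .of_injective σ hσ
  have : Fintype κ := .ofFinite κ
  refine ⟨κ, inferInstance, σ, hli₀, ?_⟩
  have hli : ∀ᶠ x in 𝓝 x₀, LinearIndependent ℝ fun b => v (σ b) x :=
    (continuousAt_pi.2 fun b => hv (σ b)).eventually hli₀.eventually
  filter_upwards [hli, hrank] with x hlix hrankx i
  have hle : span ℝ (range fun b => v (σ b) x) ≤ span ℝ (range fun i => v i x) :=
    span_mono (range_comp_subset_range σ fun i => v i x)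
  have heq := eq_of_le_of_finrank_le hle <| by
    rw [finrank_span_eq_card hlix, hrankx, ← hspan₀]
    exact (finrank_span_eq_card hli₀).le
  exact heq ▸ subset_span (mem_range_self i)

namespace Module.Dual

variable {V : Type*} [AddCommGroup V] [Module ℝ V]

theorem eq_comp_add_smul (ℓ w : Module.Dual ℝ V) {v₀ : V} (hv₀ : w v₀ ≠ 0) :
    ℓ = ℓ ∘ₗ (LinearMap.id - (w v₀)⁻¹ • w.smulRight v₀) + (ℓ v₀ / w v₀) • w := by
  ext v
  simp only [LinearMap.add_apply, LinearMap.comp_apply, LinearMap.sub_apply, LinearMap.id_apply,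
    LinearMap.smul_apply, LinearMap.smulRight_apply, map_sub, map_smul, smul_eq_mul]
  field_simp
  ring

/-- Farkas' lemma, by induction on `k`. If the last inequality is needed, a point `v₀` where
the others hold but `f v₀ < 0` gives the projection `π` along `v₀` onto `ker (w last)`; the
induction hypothesis applies to the `w i ∘ π` and `f ∘ π`, and `eq_comp_add_smul` recovers the
coefficient of `w last`. -/
theorem exists_nonneg_sum_smul_eq_of_fin : ∀ (k : ℕ) (w : Fin k → Module.Dual ℝ V)
    (f : Module.Dual ℝ V), (∀ v, (∀ i, 0 ≤ w i v) → 0 ≤ f v) →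
    ∃ μ : Fin k → ℝ, (∀ i, 0 ≤ μ i) ∧ f = ∑ i, μ i • w i
  | 0, w, f, hf => by
    refine ⟨0, fun _ => le_rfl, LinearMap.ext fun v => ?_⟩
    have h₁ := hf v finZeroElim
    have h₂ := hf (-v) finZeroElim
    rw [map_neg] at h₂
    simp only [Finset.univ_eq_empty, Finset.sum_empty, LinearMap.zero_apply]
    linarith
  | k + 1, w, f, hf => by
    by_cases hcase : ∀ v, (∀ i : Fin k, 0 ≤ w i.castSucc v) → 0 ≤ f v
    · obtain ⟨μ, hμ, rfl⟩ := exists_nonneg_sum_smul_eq_of_fin k _ f hcase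
      refine ⟨Fin.snoc μ 0, Fin.lastCases (by simp) (by simpa using hμ), ?_⟩
      simp [Fin.sum_univ_castSucc]
    push Not at hcase
    obtain ⟨v₀, hv₀, hfv₀⟩ := hcase
    have hwv₀ : w (Fin.last k) v₀ < 0 := by
      by_contra! h
      exact hfv₀.not_ge (hf v₀ (Fin.lastCases h hv₀))
    set π : V →ₗ[ℝ] V := LinearMap.id - (w (Fin.last k) v₀)⁻¹ • (w (Fin.last k)).smulRight v₀
    have hπ : w (Fin.last k) ∘ₗ π = 0 := by
      have := eq_comp_add_smul (w (Fin.last k)) (w (Fin.last k)) hwv₀.ne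
      rw [div_self hwv₀.ne, one_smul] at this
      exact add_eq_right.1 this.symm
    obtain ⟨μ, hμ, hfμ⟩ := exists_nonneg_sum_smul_eq_of_fin k (fun i => w i.castSucc ∘ₗ π)
      (f ∘ₗ π) fun v hv => hf (π v) (Fin.lastCases (by simp [← LinearMap.comp_apply, hπ]) hv)
    set ℓ := f - ∑ i, μ i • w i.castSucc
    have hℓπ : ℓ ∘ₗ π = 0 := by
      ext v
      simpa [ℓ, sub_eq_zero] using LinearMap.congr_fun hfμ v
    have hℓ := eq_comp_add_smul ℓ (w (Fin.last k)) hwv₀.ne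
    rw [hℓπ, zero_add] at hℓ
    have hℓv₀ : ℓ v₀ < 0 := by
      have : 0 ≤ ∑ i, μ i * w i.castSucc v₀ :=
        Finset.sum_nonneg fun i _ => mul_nonneg (hμ i) (hv₀ i)
      simp only [ℓ, LinearMap.sub_apply, LinearMap.coe_sum, Finset.sum_apply, LinearMap.coe_smul,
        Pi.smul_apply, smul_eq_mul]
      linarith
    refine ⟨Fin.snoc μ (ℓ v₀ / w (Fin.last k) v₀),
      Fin.lastCases (by simpa using (div_pos_of_neg_of_neg hℓv₀ hwv₀).le) (by simpa using hμ), ?_⟩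
    rw [Fin.sum_univ_castSucc]
    simp only [Fin.snoc_castSucc, Fin.snoc_last, ← hℓ, ℓ, add_sub_cancel]

theorem exists_nonneg_sum_smul_eq {ι : Type*} [Fintype ι] (w : ι → Module.Dual ℝ V)
    (f : Module.Dual ℝ V) (hf : ∀ v, (∀ i, 0 ≤ w i v) → 0 ≤ f v) :
    ∃ μ : ι → ℝ, (∀ i, 0 ≤ μ i) ∧ f = ∑ i, μ i • w i := by
  let e := Fintype.equivFin ι
  obtain ⟨μ, hμ, hf⟩ := exists_nonneg_sum_smul_eq_of_fin _ (w ∘ e.symm) f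
    fun v hv => hf v fun i => by simpa using hv (e i)
  refine ⟨μ ∘ e, fun i => hμ (e i), ?_⟩
  rw [hf, ← e.symm.sum_comp]
  simp

theorem exists_sum_smul_add_nonneg_sum_smul_eq {ι κ : Type*} [Fintype ι] [Fintype κ]
    (a : ι → Module.Dual ℝ V) (b : κ → Module.Dual ℝ V) (f : Module.Dual ℝ V)
    (hf : ∀ v, (∀ i, a i v = 0) → (∀ j, 0 ≤ b j v) → 0 ≤ f v) :
    ∃ (lam : ι → ℝ) (μ : κ → ℝ), (∀ j, 0 ≤ μ j) ∧ f = ∑ i, lam i • a i + ∑ j, μ j • b j := by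
  obtain ⟨μ, hμ, rfl⟩ := exists_nonneg_sum_smul_eq (Sum.elim (Sum.elim a (-a)) b) f
    fun v hv => hf v (fun i => le_antisymm (by simpa using hv (.inl (.inr i))) (hv (.inl (.inl i))))
      fun j => hv (.inr j)
  refine ⟨fun i => μ (.inl (.inl i)) - μ (.inl (.inr i)), fun j => μ (.inr j),
    fun j => hμ (.inr j), ?_⟩
  simp only [Fintype.sum_sum_type, Sum.elim_inl, Sum.elim_inr, Pi.neg_apply, smul_neg,
    Finset.sum_neg_distrib, ← sub_eq_add_neg, ← Finset.sum_sub_distrib]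
  exact congrArg (· + _) (Finset.sum_congr rfl fun i _ => (sub_smul _ _ _).symm)

end Module.Dual

section NLP

variable {n m p : ℕ} {f : (Fin n → ℝ) → ℝ} {h : Fin m → (Fin n → ℝ) → ℝ}
  {g : Fin p → (Fin n → ℝ) → ℝ} {xs : Fin n → ℝ}

def activeConstraints (h : Fin m → (Fin n → ℝ) → ℝ) (g : Fin p → (Fin n → ℝ) → ℝ)
    (xs : Fin n → ℝ) : Fin m ⊕ {j : Fin p // g j xs = 0} → (Fin n → ℝ) → ℝ :=
  Sum.elim h fun j => g j.1

theorem rank_Jac_eq_finrank_span_fderiv (x : Fin n → ℝ) :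
    (Jac h g xs x).rank =
      finrank ℝ (span ℝ (range fun i => fderiv ℝ (activeConstraints h g xs i) x)) := by
  let T : ((Fin n → ℝ) →L[ℝ] ℝ) →ₗ[ℝ] Fin n → ℝ :=
    LinearMap.pi fun k => (ContinuousLinearMap.apply ℝ ℝ (Pi.single k 1 : Fin n → ℝ)).toLinearMap
  have hT : Function.Injective T := fun φ ψ hφψ => ContinuousLinearMap.coe_injective <|
    (Pi.basisFun ℝ (Fin n)).ext fun k => by simpa [T] using congrFun hφψ k
  have hrows : (Jac h g xs x).row = T ∘ fun i => fderiv ℝ (activeConstraints h g xs i) x := by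
    ext (i | j) k <;> rfl
  rw [Matrix.rank_eq_finrank_span_row, hrows, range_comp, span_image]
  exact (equivMapOfInjective T hT _).finrank_eq.symm

theorem Feas.eventually_feas_of_active (hfeas : Feas h g xs) (hg : ∀ j, ContinuousAt (g j) xs) :
    ∀ᶠ x in 𝓝 xs, (∀ i, h i x = 0) → (∀ j, g j xs = 0 → g j x ≤ 0) → Feas h g x := by
  have hinactive : ∀ᶠ x in 𝓝 xs, ∀ j, g j xs ≠ 0 → g j x ≤ 0 :=
    eventually_all.2 fun j => by
      by_cases hj : g j xs = 0
      · exact .of_forall fun _ hj' => absurd hj hj'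
      · exact ((hg j).eventually_lt_const (lt_of_le_of_ne (hfeas.2 j) hj)).mono
          fun _ hx _ => hx.le
  filter_upwards [hinactive] with x hx hhx hgx
  exact ⟨hhx, fun j => if hj : g j xs = 0 then hgx j hj else hx j hj⟩

theorem hasFDerivAt_Lagr {x : Fin n → ℝ} (lam : Fin m → ℝ) (mu : Fin p → ℝ)
    (hf : DifferentiableAt ℝ f x) (hh : ∀ i, DifferentiableAt ℝ (h i) x)
    (hg : ∀ j, DifferentiableAt ℝ (g j) x) :
    HasFDerivAt (Lagr f h g lam mu)
      (fderiv ℝ f x + ∑ i, lam i • fderiv ℝ (h i) x + ∑ j, mu j • fderiv ℝ (g j) x) x :=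
  (hf.hasFDerivAt.add (.fun_sum fun i _ => (hh i).hasFDerivAt.const_mul (lam i))).add
    (.fun_sum fun j _ => (hg j).hasFDerivAt.const_mul (mu j))

theorem Lagr_eq_of_activeConstraints_eq {lam : Fin m → ℝ} {mu : Fin p → ℝ} {x : Fin n → ℝ}
    (hfeas : Feas h g xs) (hcompl : ∀ j, mu j * g j xs = 0)
    (hx : ∀ i, activeConstraints h g xs i x = activeConstraints h g xs i xs) :
    Lagr f h g lam mu x = f x := by
  have hh : ∀ i, lam i * h i x = 0 := fun i => by
    simp [show h i x = h i xs from hx (.inl i), hfeas.1 i]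
  have hg : ∀ j, mu j * g j x = 0 := fun j => by
    by_cases hj : g j xs = 0
    · simp [show g j x = g j xs from hx (.inr ⟨j, hj⟩), hj]
    · simp [(mul_eq_zero.1 (hcompl j)).resolve_right hj]
  simp [Lagr, hh, hg]

theorem IsLocalMinOn.fderiv_nonneg_of_strict_direction
    (hmin : IsLocalMinOn f {x | Feas h g x} xs) (hfeas : Feas h g xs)
    (hf : DifferentiableAt ℝ f xs) (hh : ∀ i, ContDiffAt ℝ 1 (h i) xs)
    (hg : ∀ j, DifferentiableAt ℝ (g j) xs)
    (hli : LinearIndependent ℝ fun i => fderiv ℝ (h i) xs) {d : Fin n → ℝ}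
    (hdh : ∀ i, fderiv ℝ (h i) xs d = 0) (hdg : ∀ j, g j xs = 0 → fderiv ℝ (g j) xs d < 0) :
    0 ≤ fderiv ℝ f xs d := by
  obtain ⟨γ, hγ, hγ0, hγd, hγh⟩ :=
    exists_curve_of_linearIndependent_fderiv hh one_ne_zero hli hdh
  have hγt : Tendsto γ (𝓝[>] 0) (𝓝 xs) :=
    hγ0 ▸ hγ.continuousAt.tendsto.mono_left nhdsWithin_le_nhds
  have hchain {ψ : (Fin n → ℝ) → ℝ} (hψ : DifferentiableAt ℝ ψ xs) :
      HasDerivAt (fun t => ψ (γ t)) (fderiv ℝ ψ xs d) 0 :=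
    (show HasFDerivAt ψ (fderiv ℝ ψ xs) (γ 0) by rw [hγ0]; exact hψ.hasFDerivAt).comp_hasDerivAt 0
      hγd
  have hactive : ∀ᶠ t in 𝓝[>] 0, ∀ j, g j xs = 0 → g j (γ t) ≤ 0 :=
    eventually_all.2 fun j => by
      by_cases hj : g j xs = 0
      · exact ((hchain (hg j)).eventually_neg_nhdsGT (hdg j hj) (by rw [hγ0, hj])).mono
          fun _ ht _ => ht.le
      · exact .of_forall fun _ hj' => absurd hj' hj
  have hfeasγ : ∀ᶠ t in 𝓝[>] 0, Feas h g (γ t) := by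
    filter_upwards [hγt.eventually (hfeas.eventually_feas_of_active fun j => (hg j).continuousAt),
      nhdsWithin_le_nhds hγh, hactive] with t ht hht hgt
    exact ht (fun i => (hht i).trans (hfeas.1 i)) hgt
  have hfγ : ∀ᶠ t in 𝓝[>] 0, f (γ 0) ≤ f (γ t) :=
    hγ0 ▸ (tendsto_nhdsWithin_iff.2 ⟨hγt, hfeasγ⟩).eventually hmin
  exact (hchain hf).nonneg_of_eventually_le_nhdsGT hfγ

theorem IsLocalMinOn.fderiv_nonneg_of_mfcq (hmin : IsLocalMinOn f {x | Feas h g x} xs)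
    (hfeas : Feas h g xs) (hf : DifferentiableAt ℝ f xs) (hh : ∀ i, ContDiffAt ℝ 1 (h i) xs)
    (hg : ∀ j, DifferentiableAt ℝ (g j) xs) (hmfcq : MFCQ h g xs) {d : Fin n → ℝ}
    (hdh : ∀ i, fderiv ℝ (h i) xs d = 0) (hdg : ∀ j, g j xs = 0 → fderiv ℝ (g j) xs d ≤ 0) :
    0 ≤ fderiv ℝ f xs d := by
  obtain ⟨hli, d₀, hd₀h, hd₀g⟩ := hmfcq
  have hlim : Tendsto (fun ε : ℝ => fderiv ℝ f xs d + ε * fderiv ℝ f xs d₀) (𝓝[>] 0)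
      (𝓝 (fderiv ℝ f xs d)) := by
    have hε : Tendsto (fun ε : ℝ => ε) (𝓝[>] 0) (𝓝 0) := nhdsWithin_le_nhds
    simpa using tendsto_const_nhds.add (hε.mul_const (fderiv ℝ f xs d₀))
  refine ge_of_tendsto hlim <| eventually_nhdsWithin_of_forall fun ε (hε : 0 < ε) => ?_
  have := hmin.fderiv_nonneg_of_strict_direction hfeas hf hh hg hli (d := d + ε • d₀)
    (fun i => by simp [hdh i, hd₀h i])
    fun j hj => by
      simpa using add_neg_of_nonpos_of_neg (hdg j hj) (mul_neg_of_pos_of_neg hε (hd₀g j hj))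
  simpa using this

theorem IsLocalMinOn.exists_isLagMult (hmin : IsLocalMinOn f {x | Feas h g x} xs)
    (hfeas : Feas h g xs) (hf : DifferentiableAt ℝ f xs) (hh : ∀ i, ContDiffAt ℝ 1 (h i) xs)
    (hg : ∀ j, DifferentiableAt ℝ (g j) xs) (hmfcq : MFCQ h g xs) :
    ∃ (lam : Fin m → ℝ) (mu : Fin p → ℝ), IsLagMult f h g xs lam mu := by
  let b : Fin p → Module.Dual ℝ (Fin n → ℝ) := fun j =>
    if g j xs = 0 then -(fderiv ℝ (g j) xs : (Fin n → ℝ) →ₗ[ℝ] ℝ) else 0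
  obtain ⟨lam, μ, hμ, hfμ⟩ := Module.Dual.exists_sum_smul_add_nonneg_sum_smul_eq
    (fun i => (fderiv ℝ (h i) xs : (Fin n → ℝ) →ₗ[ℝ] ℝ)) b (fderiv ℝ f xs)
    fun v hv hbv => hmin.fderiv_nonneg_of_mfcq hfeas hf hh hg hmfcq hv fun j hj => by
      simpa [b, hj] using hbv j
  let mu : Fin p → ℝ := fun j => if g j xs = 0 then μ j else 0
  have hmu : ∀ j v, mu j * fderiv ℝ (g j) xs v = -(μ j * b j v) := fun j v => by
    by_cases hj : g j xs = 0 <;> simp [mu, b, hj]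
  refine ⟨-lam, mu, fun j => ?_, ?_, fun j => ?_⟩
  · by_cases hj : g j xs = 0 <;> simp [mu, hj, hμ j]
  · rw [(hasFDerivAt_Lagr _ _ hf (fun i => (hh i).differentiableAt one_ne_zero) hg).fderiv]
    ext v
    have hv := LinearMap.congr_fun hfμ v
    simp only [LinearMap.add_apply, LinearMap.coe_sum, Finset.sum_apply, LinearMap.coe_smul,
      Pi.smul_apply, smul_eq_mul, ContinuousLinearMap.coe_coe] at hv
    simp only [Pi.neg_apply, _root_.add_apply, _root_.sum_apply, _root_.smul_apply, smul_eq_mul,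
      neg_mul, Finset.sum_neg_distrib, hmu, _root_.zero_apply]
    linarith
  · by_cases hj : g j xs = 0 <;> simp [mu, hj]

theorem exists_curve_activeConstraints_eq (hh : ∀ i, ContDiff ℝ 2 (h i))
    (hg : ∀ j, ContDiff ℝ 2 (g j))
    (hconst : ∀ᶠ x in 𝓝 xs, (Jac h g xs x).rank = (Jac h g xs xs).rank) {d : Fin n → ℝ}
    (hd : critSub h g xs d) :
    ∃ γ : ℝ → Fin n → ℝ, ContDiffAt ℝ 2 γ 0 ∧ γ 0 = xs ∧ HasDerivAt γ d 0 ∧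
      ∀ᶠ t in 𝓝 0, ∀ i, activeConstraints h g xs i (γ t) = activeConstraints h g xs i xs := by
  set c := activeConstraints h g xs
  have hc : ∀ i, ContDiff ℝ 2 (c i) := by rintro (i | j); exacts [hh i, hg j]
  obtain ⟨κ, _, σ, hli, hspan⟩ := exists_linearIndependent_eventually_mem_span
    (v := fun i => fderiv ℝ (c i))
    (fun i => ((hc i).continuous_fderiv (by norm_num)).continuousAt)
    (by simpa only [rank_Jac_eq_finrank_span_fderiv] using hconst)
  have hdc : ∀ i, fderiv ℝ (c i) xs d = 0 := by
    rintro (i | ⟨j, hj⟩); exacts [hd.1 i, hd.2 j hj]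
  obtain ⟨γ, hγ, hγ0, hγd, hγc⟩ := exists_curve_of_linearIndependent_fderiv
    (fun b => (hc (σ b)).contDiffAt) two_ne_zero hli fun b => hdc (σ b)
  refine ⟨γ, hγ, hγ0, hγd, eventually_all.2 fun i => ?_⟩
  have := eventually_comp_eq_of_fderiv_mem_span (F := fun b => c (σ b))
    (fun b => (hc (σ b)).differentiable two_ne_zero) ((hc i).differentiable two_ne_zero)
    ((hγ.eventually (by simp)).mono fun t ht => ht.differentiableAt two_ne_zero)
    (hγ0 ▸ hγc) ((hγ0 ▸ hγ.continuousAt.tendsto).eventually (hspan.mono fun x hx => hx i))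
  rwa [hγ0] at this

theorem IsLocalMinOn.hessQ_Lagr_nonneg (hmin : IsLocalMinOn f {x | Feas h g x} xs)
    (hfeas : Feas h g xs) (hf : ContDiff ℝ 2 f) (hh : ∀ i, ContDiff ℝ 2 (h i))
    (hg : ∀ j, ContDiff ℝ 2 (g j))
    (hconst : ∀ᶠ x in 𝓝 xs, (Jac h g xs x).rank = (Jac h g xs xs).rank)
    {lam : Fin m → ℝ} {mu : Fin p → ℝ} (hLM : IsLagMult f h g xs lam mu) {d : Fin n → ℝ}
    (hd : critSub h g xs d) : 0 ≤ hessQ (Lagr f h g lam mu) xs d := by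
  obtain ⟨γ, hγ, hγ0, hγd, hconserved⟩ := exists_curve_activeConstraints_eq hh hg hconst hd
  have hγt : Tendsto γ (𝓝 0) (𝓝 xs) := hγ0 ▸ hγ.continuousAt.tendsto
  have hfeasγ : ∀ᶠ t in 𝓝 0, Feas h g (γ t) := by
    filter_upwards [hγt.eventually <| hfeas.eventually_feas_of_active fun j =>
      (hg j).continuous.continuousAt, hconserved] with t ht hct
    exact ht (fun i => (hct (.inl i)).trans (hfeas.1 i))
      fun j hj => ((hct (.inr ⟨j, hj⟩)).trans hj).le
  have hLmin : IsLocalMin (fun t => Lagr f h g lam mu (γ t)) 0 := by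
    filter_upwards [(tendsto_nhdsWithin_iff.2 ⟨hγt, hfeasγ⟩).eventually hmin, hconserved]
      with t hft hct
    rwa [hγ0, Lagr_eq_of_activeConstraints_eq hfeas hLM.2.2 fun _ => rfl,
      Lagr_eq_of_activeConstraints_eq hfeas hLM.2.2 hct]
  have hLc : ContDiff ℝ 2 (Lagr f h g lam mu) := by
    unfold Lagr
    fun_prop
  have := hLmin.deriv_deriv_nonneg (hLc.continuous.continuousAt.comp hγ.continuousAt)
  rwa [deriv_deriv_comp_eq_iteratedFDeriv hLc.contDiffAt (hγ0 ▸ hLM.2.1) hγ hγd, hγ0] at this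

end NLP

/-- Andreani–Martínez–Schuverdt: MFCQ plus constant rank of the Jacobian in a
neighborhood imply WSOC at a local minimizer. -/
theorem stmt7 {n m p : ℕ} (f : (Fin n → ℝ) → ℝ) (h : Fin m → (Fin n → ℝ) → ℝ)
    (g : Fin p → (Fin n → ℝ) → ℝ)
    (hf : ContDiff ℝ 2 f) (hh : ∀ i, ContDiff ℝ 2 (h i)) (hg : ∀ j, ContDiff ℝ 2 (g j))
    (xs : Fin n → ℝ) (hfeas : Feas h g xs)
    (hmin : IsLocalMinOn f {x | Feas h g x} xs)
    (hmfcq : MFCQ h g xs)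
    (hconst : ∀ᶠ x in nhds xs, (Jac h g xs x).rank = (Jac h g xs xs).rank) :
    ∃ (lam : Fin m → ℝ) (mu : Fin p → ℝ), IsLagMult f h g xs lam mu ∧
      ∀ d, critSub h g xs d → 0 ≤ hessQ (Lagr f h g lam mu) xs d := by
  obtain ⟨lam, mu, hLM⟩ := hmin.exists_isLagMult hfeas (hf.differentiable two_ne_zero xs)
    (fun i => (hh i).contDiffAt.of_le one_le_two) (fun j => (hg j).differentiable two_ne_zero xs)
    hmfcq
  exact ⟨lam, mu, hLM, fun d hd => hmin.hessQ_Lagr_nonneg hfeas hf hh hg hconst hLM hd⟩
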